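/- arXiv:1707.06965 — 6 statements merged into one kernel-verified Lean document; each statement's English description precedes it below -/
import Mathlib

section
/- Let k ≥ 1, t = ⌊log_2 k⌋ + 1, and n ≥ 2k + 1 + 2^t. Then w(k,n) - w(k, n - 2^t) = s(k, k+1+2^t, 2^t), where the right-hand side is independent of n. -/
/-- Derivative of a binary sequence (indexed by ℕ, zero-padded beyond its length). -/
def d (x : ℕ → ZMod 2) : ℕ → ZMod 2 := fun i => x i + x (i + 1)

/-- The k-th canonical basis vector (as a zero-padded ℕ-indexed sequence). -/
def e (k : ℕ) : ℕ → ZMod 2 := fun i => if i = k then 1 else 0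

/-- Zero-padding of a vector of F_2^n to an ℕ-indexed sequence. -/
def pad (n : ℕ) (x : Fin n → ZMod 2) : ℕ → ZMod 2 :=
  fun i => if h : i < n then x ⟨i, h⟩ else 0

/-- Number of ones among the first `len` entries of a sequence. -/
def rowW (x : ℕ → ZMod 2) (len : ℕ) : ℕ :=
  ((Finset.range len).filter (fun c => x c = 1)).card

/-- Weight of the Steinhaus triangle of size n generated by x. -/
def triW (x : ℕ → ZMod 2) (n : ℕ) : ℕ :=
  ∑ r ∈ Finset.range n, rowW (d^[r] x) (n - r)

/-- w k n : weight of the Steinhaus triangle generated by e_k^{(n)}. -/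
def w (k n : ℕ) : ℕ := triW (e k) n

/-- s k n m : total weight of rows 0,…,m-1 of the triangle T(e_k^{(n)}). -/
def s (k n m : ℕ) : ℕ :=
  ∑ r ∈ Finset.range m, rowW (d^[r] (e k)) (n - r)

/-!
Over `F₂` the derivative is `1 + S` for the shift `S`, so by Frobenius `∂^(2^t) = 1 + S^(2^t)`.
When `k < 2^t` this fixes `e_k`, hence the rows of the triangle of `e_k` are periodic with period
`2^t`. Moreover every row vanishes beyond position `k`, so once a row is longer than `k` its weight
does not depend on its length. Removing the first `2^t` rows of the triangle of size `n` therefore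
leaves the triangle of size `n - 2^t`, and the removed rows have the same weights as the first
`2^t` rows of the triangle of size `k + 1 + 2^t`.
-/

theorem iterate_d_two_pow_apply (x : ℕ → ZMod 2) (t i : ℕ) :
    d^[2 ^ t] x i = x i + x (i + 2 ^ t) := by
  induction t generalizing x i with
  | zero => rfl
  | succ t ih =>
    rw [pow_succ, mul_two, Function.iterate_add_apply, ih, ih, ih, add_assoc i, add_assoc,
      ← add_assoc (x (i + 2 ^ t)), CharTwo.add_self_eq_zero, zero_add]

theorem iterate_d_apply_eq_zero {x : ℕ → ZMod 2} {N : ℕ} (hx : ∀ i, N ≤ i → x i = 0) (r : ℕ) :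
    ∀ i, N ≤ i → d^[r] x i = 0 := by
  induction r with
  | zero => exact hx
  | succ r ih =>
    intro i hi
    rw [Function.iterate_succ_apply', d, ih i hi, ih (i + 1) (by omega), add_zero]

theorem e_apply_eq_zero {k i : ℕ} (hi : k + 1 ≤ i) : e k i = 0 :=
  if_neg (by omega)

theorem iterate_d_e_add_two_pow {k t : ℕ} (hk : k < 2 ^ t) (r : ℕ) :
    d^[r + 2 ^ t] (e k) = d^[r] (e k) := by
  have hfix : d^[2 ^ t] (e k) = e k := by
    funext i
    rw [iterate_d_two_pow_apply, e_apply_eq_zero (i := i + 2 ^ t) (by omega), add_zero]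
  rw [Function.iterate_add_apply, hfix]

theorem rowW_eq_of_le {x : ℕ → ZMod 2} {N L : ℕ} (hx : ∀ i, N ≤ i → x i = 0) (hL : N ≤ L) :
    rowW x L = rowW x N := by
  unfold rowW
  congr 1
  ext i
  simp only [Finset.mem_filter, Finset.mem_range]
  refine ⟨fun ⟨_, hi⟩ => ⟨?_, hi⟩, fun ⟨hiN, hi⟩ => ⟨by omega, hi⟩⟩
  by_contra hiN
  simp [hx i (by omega)] at hi

theorem rowW_iterate_d_e_eq {k L L' : ℕ} (hL : k + 1 ≤ L) (hL' : k + 1 ≤ L') (r : ℕ) :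
    rowW (d^[r] (e k)) L = rowW (d^[r] (e k)) L' := by
  have hrow := iterate_d_apply_eq_zero (x := e k) (fun _ => e_apply_eq_zero) r
  rw [rowW_eq_of_le hrow hL, rowW_eq_of_le hrow hL']

theorem w_two_pow_add {k t m : ℕ} (hk : k < 2 ^ t) (hm : k ≤ m) :
    w k (2 ^ t + m) = s k (k + 1 + 2 ^ t) (2 ^ t) + w k m := by
  rw [w, triW, Finset.sum_range_add, s, w, triW]
  congr 1
  · refine Finset.sum_congr rfl fun r hr => ?_
    have hr : r < 2 ^ t := Finset.mem_range.mp hr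
    exact rowW_iterate_d_e_eq (by omega) (by omega) r
  · refine Finset.sum_congr rfl fun r _ => ?_
    rw [add_comm (2 ^ t) r, iterate_d_e_add_two_pow hk]
    congr 1
    omega

theorem stmt9_general (k : ℕ) (t : ℕ) (ht : t = Nat.log 2 k + 1)
    (n : ℕ) (hn : 2 * k + 1 + 2 ^ t ≤ n) :
    w k n - w k (n - 2 ^ t) = s k (k + 1 + 2 ^ t) (2 ^ t) ∧
    w k (n - 2 ^ t) ≤ w k n := by
  have hk : k < 2 ^ t := ht ▸ Nat.lt_pow_succ_log_self (by norm_num) k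
  obtain ⟨m, rfl⟩ : ∃ m, n = 2 ^ t + m := ⟨n - 2 ^ t, by omega⟩
  rw [Nat.add_sub_cancel_left, w_two_pow_add hk (by omega)]
  omega

/-- w(k,n) - w(k,n-2^t) = s(k, k+1+2^t, 2^t), independent of n. -/
theorem stmt9 (k : ℕ) (hk : 1 ≤ k) (t : ℕ) (ht : t = Nat.log 2 k + 1)
    (n : ℕ) (hn : 2 * k + 1 + 2 ^ t ≤ n) :
    w k n - w k (n - 2 ^ t) = s k (k + 1 + 2 ^ t) (2 ^ t) ∧
    w k (n - 2 ^ t) ≤ w k n :=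
  stmt9_general k t ht n hn
end

section
/- Let k ≥ 1 and n ≥ 2k+1 be integers, t = ⌊log_2 k⌋ + 1, q = ⌊n/2^t⌋, r = n - 2^t q, λ = s(k, k+1+2^t, 2^t), and μ = w(k, r + 2^t). Then w(k,n) = (q-1)·λ + μ. -/
lemma d_iter_e (r k : ℕ) : ∀ i,
    (d^[r] (e k)) i = if i ≤ k then ((r.choose (k - i) : ZMod 2)) else 0 := by
  induction r with
  | zero =>
    intro i
    simp only [Function.iterate_zero, id, e]
    rcases lt_trichotomy i k with h | h | h
    · rw [if_neg h.ne, if_pos h.le, Nat.choose_eq_zero_of_lt (by omega), Nat.cast_zero]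
    · subst h; simp
    · rw [if_neg (by omega), if_neg (by omega)]
  | succ r ih =>
    intro i
    rw [Function.iterate_succ_apply']
    show d^[r] (e k) i + d^[r] (e k) (i + 1) = _
    rw [ih, ih]
    rcases lt_trichotomy i k with h | h | h
    · have h1 : i + 1 ≤ k := h
      simp only [if_pos h.le, if_pos h1]
      have hki : k - i = (k - (i + 1)) + 1 := by omega
      rw [hki, Nat.choose_succ_succ, Nat.cast_add, add_comm]
    · subst h
      rw [if_pos le_rfl, if_pos le_rfl, if_neg (by omega), Nat.sub_self]
      simp
    · rw [if_neg (by omega), if_neg (by omega), if_neg (by omega), add_zero]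

lemma d_iter_e_period {k t : ℕ} (hk : k < 2 ^ t) : d^[2 ^ t] (e k) = e k := by
  funext i
  rw [d_iter_e, e]
  rcases lt_trichotomy i k with h | h | h
  · rw [if_pos h.le, if_neg h.ne]
    have h1 : k - i ≠ 0 := by omega
    have h2 : k - i ≠ 2 ^ t := by omega
    have h3 := Nat.Prime.dvd_choose_pow Nat.prime_two h1 h2
    exact (ZMod.natCast_eq_zero_iff _ _).mpr h3
  · subst h; simp
  · rw [if_neg (by omega), if_neg (by omega)]

lemma rowW_stable (k j L : ℕ) (hL : k + 1 ≤ L) :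
    rowW (d^[j] (e k)) L = rowW (d^[j] (e k)) (k + 1) := by
  unfold rowW
  congr 1
  apply Finset.ext
  intro c
  simp only [Finset.mem_filter, Finset.mem_range]
  constructor
  · rintro ⟨_, h1⟩
    refine ⟨?_, h1⟩
    by_contra hck
    rw [d_iter_e, if_neg (by omega)] at h1
    exact one_ne_zero h1.symm
  · rintro ⟨hc, h1⟩
    exact ⟨lt_of_lt_of_le hc hL, h1⟩

lemma step_lemma (k t n : ℕ) (hk : k < 2 ^ t) (hn : k + 2 ^ t ≤ n) :
    triW (e k) n = s k (k + 1 + 2 ^ t) (2 ^ t) + triW (e k) (n - 2 ^ t) := by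
  obtain ⟨m, rfl⟩ : ∃ m, n = 2 ^ t + m := ⟨n - 2 ^ t, by omega⟩
  have hm : k ≤ m := by omega
  have hc : 2 ^ t + m - 2 ^ t = m := by omega
  rw [hc]
  unfold triW s
  rw [Finset.sum_range_add]
  congr 1
  · apply Finset.sum_congr rfl
    intro j hj
    rw [Finset.mem_range] at hj
    rw [rowW_stable k j (2 ^ t + m - j) (by omega),
      rowW_stable k j (k + 1 + 2 ^ t - j) (by omega)]
  · apply Finset.sum_congr rfl
    intro j hj
    have h1 : 2 ^ t + j = j + 2 ^ t := by omega
    rw [h1, Function.iterate_add_apply, d_iter_e_period hk]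
    congr 1
    omega

lemma multi_lemma (k t : ℕ) (hk : k < 2 ^ t) :
    ∀ q r, triW (e k) (2 ^ t * (q + 1) + r) =
      q * s k (k + 1 + 2 ^ t) (2 ^ t) + triW (e k) (2 ^ t + r) := by
  intro q
  induction q with
  | zero => intro r; simp
  | succ q ih =>
    intro r
    have hmul : 2 ^ t * (q + 1 + 1) = 2 ^ t * (q + 1) + 2 ^ t := by ring
    have hone : 2 ^ t * 1 = 2 ^ t := mul_one _
    have hle : 2 ^ t * 1 ≤ 2 ^ t * (q + 1) := Nat.mul_le_mul_left _ (by omega)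
    have h1 : k + 2 ^ t ≤ 2 ^ t * (q + 1 + 1) + r := by omega
    rw [step_lemma k t _ hk h1]
    have h2 : 2 ^ t * (q + 1 + 1) + r - 2 ^ t = 2 ^ t * (q + 1) + r := by omega
    rw [h2, ih r, Nat.succ_mul]
    omega

/-- main theorem: w(k,n) = (q-1)·λ + μ. -/
theorem stmt10 (k n : ℕ) (hk : 1 ≤ k) (hn : 2 * k + 1 ≤ n)
    (t q r lam mu : ℕ)
    (ht : t = Nat.log 2 k + 1)
    (hq : q = n / 2 ^ t)
    (hr : r = n - 2 ^ t * q)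
    (hlam : lam = s k (k + 1 + 2 ^ t) (2 ^ t))
    (hmu : mu = w k (r + 2 ^ t)) :
    w k n = (q - 1) * lam + mu := by
  have hkt : k < 2 ^ t := by
    rw [ht]; exact Nat.lt_pow_succ_log_self (by norm_num) k
  have hT2k : 2 ^ t ≤ 2 * k := by
    rw [ht, pow_succ, mul_comm]
    exact Nat.mul_le_mul_left 2 (Nat.pow_log_le_self 2 (by omega))
  have hTn : 2 ^ t ≤ n := by omega
  have hq1 : 1 ≤ q := by
    rw [hq]
    exact (Nat.one_le_div_iff (by positivity)).mpr hTn
  have hdm : 2 ^ t * q ≤ n := by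
    rw [hq, mul_comm]; exact Nat.div_mul_le_self n (2 ^ t)
  have hn' : n = 2 ^ t * ((q - 1) + 1) + r := by
    have hq' : q - 1 + 1 = q := by omega
    rw [hq', hr]; omega
  rw [w, hn', multi_lemma k t hkt (q - 1) r, hlam, hmu, w, add_comm r (2 ^ t)]
end

section
/- For all n ≥ 3, the weight of the Steinhaus triangle generated by e_1^{(n)} satisfies w(1,n) = (−5 + 6n + (−1)^n)/4. -/
lemma dr (r : ℕ) : ∀ i, d^[r] (e 1) i =
    if i = 1 then 1 else if i = 0 then (r : ZMod 2) else 0 := by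
  induction r with
  | zero => intro i; simp [e]
  | succ r ih =>
    intro i
    rw [Function.iterate_succ_apply', d]
    match i with
    | 0 => simp [ih]
    | 1 => simp [ih]
    | (m+2) => simp [ih]

lemma row_eval (r len : ℕ) : rowW (d^[r] (e 1)) len =
    (if 2 ≤ len then 1 else 0) + (if 1 ≤ len then r % 2 else 0) := by
  unfold rowW
  rcases Nat.mod_two_eq_zero_or_one r with hr | hr
  · have hc : (r : ZMod 2) = 0 := by
      rw [← ZMod.natCast_mod r 2, hr]; simp
    have hf : (Finset.range len).filter (fun c => d^[r] (e 1) c = 1)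
        = (Finset.range len).filter (fun c => c = 1) := by
      apply Finset.filter_congr; intro c _
      simp only [dr, hc]
      rcases eq_or_ne c 1 with h | h <;> simp [h, ite_self]
    rw [hf]
    rcases le_or_gt 2 len with h | h
    · have : (Finset.range len).filter (fun c => c = 1) = {1} := by
        ext c
        simp only [Finset.mem_filter, Finset.mem_range, Finset.mem_singleton]
        omega
      rw [this]; simp [h, hr]
    · have h2 : ¬ 2 ≤ len := by omega
      have : (Finset.range len).filter (fun c => c = 1) = ∅ := by
        ext c
        simp only [Finset.mem_filter, Finset.mem_range, Finset.notMem_empty, iff_false, not_and]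
        omega
      rw [this]; simp [h2, hr]
  · have hc : (r : ZMod 2) = 1 := by
      rw [← ZMod.natCast_mod r 2, hr]; simp
    have hf : (Finset.range len).filter (fun c => d^[r] (e 1) c = 1)
        = Finset.range (min len 2) := by
      ext c
      simp only [Finset.mem_filter, Finset.mem_range, dr, hc, lt_min_iff]
      constructor
      · intro ⟨h1, h2⟩
        split at h2
        · omega
        · split at h2
          · omega
          · simp at h2
      · intro ⟨h1, h2⟩
        refine ⟨h1, ?_⟩
        interval_cases c <;> simp
    rw [hf, Finset.card_range, hr]
    split_ifs with h h1 h1 <;> omega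
  
lemma sum_mod2 (n : ℕ) : ∑ r ∈ Finset.range n, r % 2 = n / 2 := by
  induction n with
  | zero => simp
  | succ n ih => rw [Finset.sum_range_succ, ih]; omega

lemma w_eval (n : ℕ) (hn : 1 ≤ n) : w 1 n = (n - 1) + n / 2 := by
  unfold w triW
  have h : ∀ r ∈ Finset.range n, rowW (d^[r] (e 1)) (n - r)
      = (if r < n - 1 then 1 else 0) + r % 2 := by
    intro r hr
    simp only [Finset.mem_range] at hr
    rw [row_eval]
    have h1 : 1 ≤ n - r := by omega
    simp only [h1, if_pos]
    congr 1
    split <;> split <;> omega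
  rw [Finset.sum_congr rfl h, Finset.sum_add_distrib, sum_mod2]
  congr 1
  have : ∀ x ∈ Finset.range n, (if x < n - 1 then 1 else 0)
      = (if x ∈ Finset.range (n - 1) then 1 else 0) := by
    intro x _; simp [Finset.mem_range]
  rw [Finset.sum_congr rfl this, Finset.sum_ite_mem]
  have : Finset.range n ∩ Finset.range (n - 1) = Finset.range (n - 1) := by
    ext c
    simp only [Finset.mem_inter, Finset.mem_range]
    omega
  rw [this, Finset.sum_const, Finset.card_range]; simp


/-- closed formula for w(1,n). -/
theorem stmt12 (n : ℕ) (hn : 3 ≤ n) :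
    (4 : ℤ) * w 1 n = -5 + 6 * n + (-1) ^ n := by
  rw [w_eval n (by omega)]
  rcases Nat.even_or_odd n with ⟨m, hm⟩ | ⟨m, hm⟩ <;> subst hm
  · rw [Even.neg_one_pow ⟨m, rfl⟩]; push_cast; omega
  · rw [Odd.neg_one_pow ⟨m, rfl⟩]; push_cast; omega
end

section
/- For all n ≥ 5, w(2,n) = (−13 + 8n − (−1)^n + 2·cos(nπ/2))/4; equivalently, w(2,n) - w(2,n-4) = 8 for n ≥ 9, with w(2,5)=7, w(2,6)=8, w(2,7)=11, w(2,8)=13. -/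
/-- Row r of the triangle generated by e₂ is given by binomial coefficients mod 2. -/
lemma d_iter_e2 (r i : ℕ) :
    d^[r] (e 2) i = if i ≤ 2 then ((r.choose (2 - i) : ℕ) : ZMod 2) else 0 := by
  induction r generalizing i with
  | zero =>
    simp only [Function.iterate_zero, id_eq, e]
    rcases Nat.lt_or_ge i 3 with h | h
    · interval_cases i <;> norm_num
    · rw [if_neg (by omega), if_neg (by omega)]
  | succ r ih =>
    rw [Function.iterate_succ_apply', d, ih, ih]
    rcases Nat.lt_or_ge i 3 with h | h
    · interval_cases i
      · rw [if_pos (by omega), if_pos (by omega), if_pos (by omega)]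
        push_cast [Nat.choose_succ_succ]; ring
      · rw [if_pos (by omega), if_pos (by omega), if_pos (by omega)]
        push_cast [Nat.choose_succ_succ]; ring
      · rw [if_pos (by omega), if_neg (by omega), if_pos (by omega)]
        norm_num
    · rw [if_neg (by omega), if_neg (by omega), if_neg (by omega)]
      ring

/-- Closed formula for the weight of row r truncated at length L. -/
def F (r L : ℕ) : ℕ :=
  (if 2 < L then 1 else 0) + (if 1 < L then r % 2 else 0)
    + (if 0 < L then r.choose 2 % 2 else 0)

lemma cast_eq_one (m : ℕ) : ((m : ZMod 2) = 1) ↔ m % 2 = 1 := by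
  rw [← ZMod.natCast_mod]
  rcases Nat.mod_two_eq_zero_or_one m with h | h <;> rw [h] <;> simp

lemma ind_eq (m : ℕ) : (if (m : ZMod 2) = 1 then 1 else 0) = m % 2 := by
  rcases Nat.mod_two_eq_zero_or_one m with h | h <;>
    simp [cast_eq_one, h]

lemma rowW_eq (r L : ℕ) : rowW (d^[r] (e 2)) L = F r L := by
  have h3 : ∀ M, 3 ≤ M → rowW (d^[r] (e 2)) M = rowW (d^[r] (e 2)) 3 := by
    intro M hM
    unfold rowW
    congr 1
    apply Finset.ext
    intro c
    simp only [Finset.mem_filter, Finset.mem_range]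
    constructor
    · rintro ⟨hc, h1⟩
      refine ⟨?_, h1⟩
      by_contra hge
      rw [d_iter_e2, if_neg (by omega)] at h1
      exact absurd h1 (by decide)
    · rintro ⟨hc, h1⟩; exact ⟨by omega, h1⟩
  have hF3 : ∀ M, 3 ≤ M → F r M = F r 3 := by
    intro M hM
    unfold F
    rw [if_pos (by omega), if_pos (by omega), if_pos (by omega),
      if_pos (by norm_num), if_pos (by norm_num), if_pos (by norm_num)]
  have key : ∀ M, M ≤ 3 → rowW (d^[r] (e 2)) M = F r M := by
    intro M hM
    unfold rowW
    rw [Finset.card_filter]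
    interval_cases M <;>
      simp only [Finset.sum_range_succ, Finset.sum_range_zero, d_iter_e2] <;>
      unfold F <;>
      norm_num [ind_eq] <;>
      omega
  rcases Nat.lt_or_ge L 4 with h | h
  · exact key L (by omega)
  · rw [h3 L (by omega), hF3 L (by omega)]
    exact key 3 (by omega)

lemma wF (n : ℕ) : w 2 n = ∑ r ∈ Finset.range n, F r (n - r) := by
  unfold w triW
  exact Finset.sum_congr rfl fun r _ => rowW_eq r (n - r)

lemma F_per (r L : ℕ) : F (4 + r) L = F r L := by
  have hc : (4 + r).choose 2 % 2 = r.choose 2 % 2 := by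
    have : (4 + r).choose 2 = r.choose 2 + 4 * r + 6 := by
      have h4 : 4 + r = (r + 3) + 1 := by omega
      rw [h4]
      simp [Nat.choose_succ_succ, Nat.choose_one_right]
      ring
    omega
  unfold F
  rw [hc]
  congr 2
  congr 1
  omega

lemma w_rec (n : ℕ) (h : 3 ≤ n) : w 2 (n + 4) = w 2 n + 8 := by
  rw [wF, wF, show n + 4 = 4 + n from by omega, Finset.sum_range_add]
  have h1 : ∑ i ∈ Finset.range n, F (4 + i) (4 + n - (4 + i)) =
      ∑ i ∈ Finset.range n, F i (n - i) := by
    apply Finset.sum_congr rfl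
    intro i _
    rw [F_per, show 4 + n - (4 + i) = n - i from by omega]
  rw [h1, Nat.add_comm]
  congr 1
  have e0 : F 0 (4 + n - 0) = 1 := by
    unfold F; rw [if_pos (by omega), if_pos (by omega), if_pos (by omega)]; rfl
  have e1 : F 1 (4 + n - 1) = 2 := by
    unfold F; rw [if_pos (by omega), if_pos (by omega), if_pos (by omega)]; rfl
  have e2 : F 2 (4 + n - 2) = 2 := by
    unfold F; rw [if_pos (by omega), if_pos (by omega), if_pos (by omega)]; rfl
  have e3 : F 3 (4 + n - 3) = 3 := by
    unfold F; rw [if_pos (by omega), if_pos (by omega), if_pos (by omega)]; rfl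
  have hs : ∑ i ∈ Finset.range 4, F i (4 + n - i) =
      F 0 (4 + n - 0) + F 1 (4 + n - 1) + F 2 (4 + n - 2) + F 3 (4 + n - 3) := by
    simp [Finset.sum_range_succ]
  omega

lemma b5 : w 2 5 = 7 := by rw [wF]; decide
lemma b6 : w 2 6 = 8 := by rw [wF]; decide
lemma b7 : w 2 7 = 11 := by rw [wF]; decide
lemma b8 : w 2 8 = 13 := by rw [wF]; decide

/-- closed formula for w(2,n). -/
theorem stmt13 :
    (∀ n : ℕ, 5 ≤ n →
      (4 : ℝ) * w 2 n = -13 + 8 * n - (-1) ^ n + 2 * Real.cos (n * Real.pi / 2)) ∧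
    (∀ n : ℕ, 9 ≤ n → w 2 n = w 2 (n - 4) + 8) ∧
    w 2 5 = 7 ∧ w 2 6 = 8 ∧ w 2 7 = 11 ∧ w 2 8 = 13 := by
  have hrec : ∀ n : ℕ, 9 ≤ n → w 2 n = w 2 (n - 4) + 8 := by
    intro n hn
    have : n = (n - 4) + 4 := by omega
    rw [this, w_rec (n - 4) (by omega), Nat.add_sub_cancel]
  refine ⟨?_, hrec, b5, b6, b7, b8⟩
  intro n
  induction n using Nat.strong_induction_on with
  | _ n ih =>
    intro hn
    by_cases h8 : n ≤ 8
    · interval_cases n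
      · rw [b5,
          show ((5:ℕ):ℝ) * Real.pi / 2 = Real.pi / 2 + 2 * Real.pi by push_cast; ring,
          Real.cos_add_two_pi, Real.cos_pi_div_two]
        norm_num
      · rw [b6,
          show ((6:ℕ):ℝ) * Real.pi / 2 = Real.pi + 2 * Real.pi by push_cast; ring,
          Real.cos_add_two_pi, Real.cos_pi]
        norm_num
      · rw [b7,
          show ((7:ℕ):ℝ) * Real.pi / 2 = (2 * Real.pi - Real.pi / 2) + 2 * Real.pi by
            push_cast; ring,
          Real.cos_add_two_pi, Real.cos_two_pi_sub, Real.cos_pi_div_two]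
        norm_num
      · rw [b8,
          show ((8:ℕ):ℝ) * Real.pi / 2 = 2 * Real.pi + 2 * Real.pi by push_cast; ring,
          Real.cos_add_two_pi, Real.cos_two_pi]
        norm_num
    · have h9 : 9 ≤ n := by omega
      have ihm := ih (n - 4) (by omega) (by omega)
      have hcast : (n : ℝ) = ((n - 4 : ℕ) : ℝ) + 4 := by
        have : n = (n - 4) + 4 := by omega
        rw [this]; push_cast; ring
      have hcos : Real.cos (n * Real.pi / 2) = Real.cos ((n - 4 : ℕ) * Real.pi / 2) := by
        rw [hcast,
          show (((n - 4 : ℕ) : ℝ) + 4) * Real.pi / 2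
            = ((n - 4 : ℕ) : ℝ) * Real.pi / 2 + 2 * Real.pi by ring,
          Real.cos_add_two_pi]
      have hpow : ((-1 : ℝ)) ^ n = (-1 : ℝ) ^ (n - 4) := by
        have : n = (n - 4) + 4 := by omega
        rw [this, pow_add]; norm_num
      rw [hrec n h9, hcos, hpow]
      push_cast
      rw [hcast] at *
      linarith [ihm]
end

section
/- For k = 1 (so t = 1), λ = s(1, 4, 2) = 3, and μ = w(1,2) = 2 when n is even, μ = w(1,3) = 3 when n is odd; hence w(1,n) = 3(⌊n/2⌋ − 1) + μ for n ≥ 3. -/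
lemma d2 : d (d (e 1)) = e 1 := by
  funext i
  match i with
  | 0 => decide
  | 1 => decide
  | (i+2) =>
    simp [d, e, show i+2 ≠ 1 from by omega, show i+3 ≠ 1 from by omega,
      show i+4 ≠ 1 from by omega]

lemma d2' : d^[2] (e 1) = e 1 := by
  show d (d (e 1)) = e 1
  exact d2

lemma rowW_e1 (n : ℕ) : rowW (e 1) (n+2) = 1 := by
  unfold rowW
  have h : (Finset.range (n+2)).filter (fun c => e 1 c = 1) = {1} := by
    ext c
    by_cases hc : c = 1 <;> simp [e, hc]
  rw [h]; rfl

lemma rowW_de1 (p : ℕ) : rowW (d (e 1)) (p+2) = 2 := by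
  unfold rowW
  have hd : ∀ c, (d (e 1) c = 1 ↔ c < 2) := by
    intro c
    match c with
    | 0 => decide
    | 1 => decide
    | (c+2) =>
      simp [d, e, show c+2 ≠ 1 from by omega, show c+3 ≠ 1 from by omega]
  have h : (Finset.range (p+2)).filter (fun c => d (e 1) c = 1) = {0, 1} := by
    ext c
    simp [hd, Finset.mem_range]
    omega
  rw [h]; rfl

lemma wrec (p : ℕ) : w 1 (p+3) = w 1 (p+1) + 3 := by
  unfold w triW
  rw [Finset.sum_range_succ', Finset.sum_range_succ']
  have hsum : ∀ i ∈ Finset.range (p+1),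
      rowW (d^[i+1+1] (e 1)) (p+3-(i+1+1)) = rowW (d^[i] (e 1)) (p+1-i) := by
    intro i _
    have h1 : d^[i+1+1] (e 1) = d^[i] (e 1) := by
      rw [show i+1+1 = i+2 from rfl, Function.iterate_add_apply d i 2, d2']
    rw [h1, show p+3-(i+1+1) = p+1-i from by omega]
  rw [Finset.sum_congr rfl hsum]
  have h0 : rowW (d^[0] (e 1)) (p+3-0) = 1 := by
    simp only [Function.iterate_zero, id_eq, Nat.sub_zero]
    exact rowW_e1 (p+1)
  have h1 : rowW (d^[0+1] (e 1)) (p+3-(0+1)) = 2 := by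
    simp only [Function.iterate_one, zero_add]
    exact rowW_de1 p
  rw [h0, h1]

/-- the case k = 1 (t = 1): λ = 3, μ = 2 or 3 by parity, and the formula. -/
theorem stmt15 :
    s 1 4 2 = 3 ∧ w 1 2 = 2 ∧ w 1 3 = 3 ∧
    (∀ n : ℕ, 3 ≤ n →
      w 1 n = 3 * (n / 2 - 1) + (if n % 2 = 0 then w 1 2 else w 1 3)) := by
  refine ⟨by decide, by decide, by decide, fun n => ?_⟩
  induction n using Nat.strong_induction_on with
  | _ n ih =>
    intro hn
    rcases n with _|_|_|_|_|m
    · omega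
    · omega
    · omega
    · decide
    · decide
    · rw [show w 1 (m+5) = w 1 (m+3) + 3 from wrec (m+2),
        ih (m+3) (by omega) (by omega),
        show (m+5) % 2 = (m+3) % 2 from by omega]
      have h2 : w 1 2 = 2 := by decide
      have h3 : w 1 3 = 3 := by decide
      rw [h2, h3]
      split <;> omega
end

section
/- For every n ≥ 1 and every x ∈ F_2^n, the weight of the Steinhaus triangle satisfies |T(x)| ≤ n(n+1)/3 if n ≡ 0, 2 (mod 3), and |T(x)| ≤ (n^2+n+1)/3 if n ≡ 1 (mod 3). -/
section helpers

def ind (z : ZMod 2) : ℕ := if z = 1 then 1 else 0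

def phi (p q : ZMod 2) : ℕ := if p = 0 ∧ q = 0 then 1 else 0

lemma rowW_zero (y : ℕ → ZMod 2) : rowW y 0 = 0 := by simp [rowW]

lemma rowW_succ (y : ℕ → ZMod 2) (m : ℕ) : rowW y (m+1) = rowW y m + ind (y m) := by
  unfold rowW ind
  rw [Finset.range_add_one, Finset.filter_insert]
  by_cases h : y m = 1
  · rw [if_pos h, if_pos h, Finset.card_insert_of_notMem (by simp)]
  · rw [if_neg h, if_neg h]
    simp

lemma rowW_le (y : ℕ → ZMod 2) (m : ℕ) : rowW y m ≤ m := by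
  classical
  exact (Finset.card_filter_le _ _).trans (le_of_eq (Finset.card_range m))

lemma d2_apply (y : ℕ → ZMod 2) (k : ℕ) : d (d y) k = y k + y (k+2) := by
  have h : ∀ a b c : ZMod 2, (a + b) + (b + c) = a + c := by decide
  show (y k + y (k+1)) + (y (k+1) + y (k+2)) = y k + y (k+2)
  exact h _ _ _

lemma base_ineq : ∀ a b : ZMod 2, ind a + ind b + ind (a + b) + phi a b ≤ 2 := by decide

lemma step_ineq : ∀ a b c : ZMod 2,
    ind c + ind (b + c) + ind (a + c) + phi b c ≤ 2 + phi a b := by decide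

lemma trap (y : ℕ → ZMod 2) (k : ℕ) :
    rowW y (k+2) + rowW (d y) (k+1) + rowW (d (d y)) k + phi (y k) (y (k+1)) ≤ 2*(k+1) := by
  induction k with
  | zero =>
    have e1 : rowW y 2 = rowW y 1 + ind (y 1) := rowW_succ y 1
    have e2 : rowW y 1 = rowW y 0 + ind (y 0) := rowW_succ y 0
    have e0 : rowW y 0 = 0 := rowW_zero y
    have f1 : rowW (d y) 1 = rowW (d y) 0 + ind (d y 0) := rowW_succ (d y) 0
    have f0 : rowW (d y) 0 = 0 := rowW_zero (d y)
    have g0 : rowW (d (d y)) 0 = 0 := rowW_zero (d (d y))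
    have hd : d y 0 = y 0 + y 1 := rfl
    rw [hd] at f1
    have key := base_ineq (y 0) (y 1)
    show rowW y 2 + rowW (d y) 1 + rowW (d (d y)) 0 + phi (y 0) (y 1) ≤ 2*1
    omega
  | succ k ih =>
    have e1 : rowW y (k+3) = rowW y (k+2) + ind (y (k+2)) := rowW_succ y (k+2)
    have e2 : rowW (d y) (k+2) = rowW (d y) (k+1) + ind (d y (k+1)) := rowW_succ (d y) (k+1)
    have e3 : rowW (d (d y)) (k+1) = rowW (d (d y)) k + ind (d (d y) k) := rowW_succ (d (d y)) k
    have hd1 : d y (k+1) = y (k+1) + y (k+2) := rfl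
    have hd2 : d (d y) k = y k + y (k+2) := d2_apply y k
    rw [hd1] at e2
    rw [hd2] at e3
    have key := step_ineq (y k) (y (k+1)) (y (k+2))
    show rowW y (k+3) + rowW (d y) (k+2) + rowW (d (d y)) (k+1) + phi (y (k+1)) (y (k+2)) ≤ 2*(k+2)
    omega

lemma triW_zero (y : ℕ → ZMod 2) : triW y 0 = 0 := by simp [triW]

lemma triW_succ (y : ℕ → ZMod 2) (n : ℕ) :
    triW y (n+1) = rowW y (n+1) + triW (d y) n := by
  unfold triW
  rw [Finset.sum_range_succ']
  have h1 : ∀ i, n + 1 - (i+1) = n - i := fun i => by omega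
  simp only [Function.iterate_succ_apply, Function.iterate_zero_apply, h1, Nat.sub_zero]
  exact Nat.add_comm _ _

lemma main_bound (n : ℕ) : ∀ y : ℕ → ZMod 2, 3 * triW y n ≤ n^2 + n + 1 := by
  induction n using Nat.strong_induction_on with
  | _ n ih =>
    rcases n with _|(_|(_|k))
    · intro y; simp [triW_zero]
    · intro y
      have e1 : triW y 1 = rowW y 1 + triW (d y) 0 := triW_succ y 0
      have e0 : triW (d y) 0 = 0 := triW_zero (d y)
      have h := rowW_le y 1
      show 3 * triW y 1 ≤ 3
      omega
    · intro y
      have e1 : triW y 2 = rowW y 2 + triW (d y) 1 := triW_succ y 1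
      have e2 : triW (d y) 1 = rowW (d y) 1 + triW (d (d y)) 0 := triW_succ (d y) 0
      have e0 : triW (d (d y)) 0 = 0 := triW_zero (d (d y))
      have g0 : rowW (d (d y)) 0 = 0 := rowW_zero (d (d y))
      have h : rowW y 2 + rowW (d y) 1 + rowW (d (d y)) 0 + phi (y 0) (y 1) ≤ 2 := trap y 0
      show 3 * triW y 2 ≤ 7
      omega
    · intro y
      have e1 : triW y (k+3) = rowW y (k+3) + triW (d y) (k+2) := triW_succ y (k+2)
      have e2 : triW (d y) (k+2) = rowW (d y) (k+2) + triW (d (d y)) (k+1) := triW_succ (d y) (k+1)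
      have e3 : triW (d (d y)) (k+1) = rowW (d (d y)) (k+1) + triW (d (d (d y))) k := triW_succ (d (d y)) k
      have h1 : rowW y (k+3) + rowW (d y) (k+2) + rowW (d (d y)) (k+1)
          + phi (y (k+1)) (y (k+2)) ≤ 2*(k+2) := trap y (k+1)
      have h2 := ih k (by omega) (d (d (d y)))
      have hsq1 : (k+3)^2 = k^2 + 6*k + 9 := by ring
      show 3 * triW y (k+3) ≤ (k+3)^2 + (k+3) + 1
      omega

end helpers


/-- Harborth's upper bound on the weight of any Steinhaus triangle. -/
theorem stmt17 (n : ℕ) (hn : 1 ≤ n) (x : Fin n → ZMod 2) :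
    (n % 3 = 0 ∨ n % 3 = 2 → triW (pad n x) n ≤ n * (n + 1) / 3) ∧
    (n % 3 = 1 → triW (pad n x) n ≤ (n ^ 2 + n + 1) / 3) := by
  have h := main_bound n (pad n x)
  rw [show n^2 + n + 1 = n*(n+1)+1 from by ring] at h
  constructor
  · rintro (h0 | h2)
    · have hd : (3:ℕ) ∣ n*(n+1) := Dvd.dvd.mul_right (Nat.dvd_of_mod_eq_zero h0) (n+1)
      obtain ⟨K, hK⟩ : ∃ K, n*(n+1) = K := ⟨_, rfl⟩
      rw [hK] at h hd ⊢
      omega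
    · have hd : (3:ℕ) ∣ n*(n+1) :=
        Dvd.dvd.mul_left (Nat.dvd_of_mod_eq_zero (by omega : (n+1) % 3 = 0)) n
      obtain ⟨K, hK⟩ : ∃ K, n*(n+1) = K := ⟨_, rfl⟩
      rw [hK] at h hd ⊢
      omega
  · intro h1
    rw [show n^2 + n + 1 = n*(n+1)+1 from by ring]
    obtain ⟨K, hK⟩ : ∃ K, n*(n+1) = K := ⟨_, rfl⟩
    rw [hK] at h ⊢
    omega
end
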